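/- Every normalized Laurent polynomial Δ ∈ ℤ[t,t⁻¹] (i.e. satisfying Δ(t⁻¹) = Δ(t) and Δ(1) = 1) can be written in a unique way in the form Δ(t) = 1 + a₀·(2 − t − t⁻¹) + Σ_{i≥1} a_i·(t^i + t^{−i})·(2 − t − t⁻¹), where the a_i are integers, all but finitely many of which are zero. -/

import Mathlib

open LaurentPolynomial

/-- Evaluation of an integer Laurent polynomial at a (nonzero) complex number `z`,
substituting `t = z`. -/
noncomputable def evalz (z : ℂ) (f : LaurentPolynomial ℤ) : ℂ :=
  f.coeff.sum fun n a => (a : ℂ) * z ^ n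

/-- The building blocks: `(2 - t - t⁻¹)` for `i = 0` and `(tⁱ + t⁻ⁱ)(2 - t - t⁻¹)` for
`i ≥ 1`. -/
noncomputable def basisP (i : ℕ) : LaurentPolynomial ℤ :=
  (if i = 0 then 1 else T (i : ℤ) + T (-(i : ℤ))) * (2 - T 1 - T (-1))

/-!
Each `basisP i` is symmetric, vanishes at `t = 1`, is supported in degrees `|n| ≤ i + 1` and has
coefficient `-1` in degrees `±(i + 1)`. This triangularity makes the family linearly independent
(uniqueness), and lets one strip a symmetric Laurent polynomial of its extreme coefficients
`c t^{±(N+1)}` by adding `c • basisP N`, until only a constant remains; evaluating at `t = 1`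
shows that this constant is `1` (existence).
-/

section Coeff

variable {R : Type*}

lemma coeff_ite_T_add_T_neg [Semiring R] (i : ℕ) (n : ℤ) :
    ((if i = 0 then 1 else T (i : ℤ) + T (-(i : ℤ)) : R[T;T⁻¹])).coeff n =
      if n.natAbs = i then 1 else 0 := by
  by_cases hi : i = 0
  · subst hi
    simp [← T_zero, eq_comm]
  · simp only [hi, if_false, AddMonoidAlgebra.coeff_add, Finsupp.add_apply, T_apply]
    split_ifs <;> first | (exfalso; omega) | simp

lemma coeff_mul_two_sub_T_one_sub_T_neg_one [Ring R] (f : R[T;T⁻¹]) (n : ℤ) :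
    (f * (2 - T 1 - T (-1))).coeff n = 2 * f.coeff n - f.coeff (n - 1) - f.coeff (n + 1) := by
  rw [mul_sub, mul_sub, mul_two, T, T, AddMonoidAlgebra.coeff_sub, AddMonoidAlgebra.coeff_sub,
    Finsupp.sub_apply, Finsupp.sub_apply, AddMonoidAlgebra.coeff_mul_single_apply,
    AddMonoidAlgebra.coeff_mul_single_apply, AddMonoidAlgebra.coeff_add, Finsupp.add_apply,
    mul_one, mul_one, two_mul, ← sub_eq_add_neg, neg_neg]

lemma coeff_neg_of_invert_eq [CommSemiring R] {f : R[T;T⁻¹]} (hf : invert f = f) (n : ℤ) :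
    f.coeff (-n) = f.coeff n := by
  conv_rhs => rw [← hf, invert_apply]

lemma exists_coeff_eq_zero_of_lt_natAbs [Semiring R] (f : R[T;T⁻¹]) :
    ∃ N : ℕ, ∀ n : ℤ, N < n.natAbs → f.coeff n = 0 :=
  ⟨f.coeff.support.sup Int.natAbs, fun _ hn => Finsupp.notMem_support_iff.mp fun hmem =>
    (Finset.le_sup (f := Int.natAbs) hmem).not_gt hn⟩

end Coeff

lemma coeff_basisP (i : ℕ) (n : ℤ) :
    (basisP i).coeff n = 2 * (if n.natAbs = i then 1 else 0)
      - (if (n - 1).natAbs = i then 1 else 0) - (if (n + 1).natAbs = i then 1 else 0) := by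
  rw [basisP, coeff_mul_two_sub_T_one_sub_T_neg_one, coeff_ite_T_add_T_neg, coeff_ite_T_add_T_neg,
    coeff_ite_T_add_T_neg]

lemma coeff_basisP_of_natAbs_eq_succ {i : ℕ} {n : ℤ} (hn : n.natAbs = i + 1) :
    (basisP i).coeff n = -1 := by
  rw [coeff_basisP]
  split_ifs <;> omega

lemma coeff_basisP_of_succ_lt_natAbs {i : ℕ} {n : ℤ} (hn : i + 1 < n.natAbs) :
    (basisP i).coeff n = 0 := by
  rw [coeff_basisP]
  split_ifs <;> omega

lemma invert_basisP (i : ℕ) : invert (basisP i) = basisP i := by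
  rw [basisP, map_mul]
  congr 1
  · split_ifs
    · exact map_one _
    · rw [map_add, invert_T, invert_T, neg_neg, add_comm]
  · rw [map_sub, map_sub, invert_T, invert_T, neg_neg, map_ofNat]
    ring

lemma coeff_linearCombination_basisP (a : ℕ →₀ ℤ) (n : ℤ) :
    (Finsupp.linearCombination ℤ basisP a).coeff n = a.sum fun i c => c * (basisP i).coeff n := by
  rw [Finsupp.linearCombination_apply, AddMonoidAlgebra.coeff_finsuppSum, Finsupp.sum_apply]
  rfl

theorem linearIndependent_basisP : LinearIndependent ℤ basisP := by
  rw [linearIndependent_iff]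
  intro a ha
  by_contra hne
  set i := a.support.max' (Finsupp.support_nonempty_iff.mpr hne)
  have hi : i ∈ a.support := Finset.max'_mem _ _
  have htop : (Finsupp.linearCombination ℤ basisP a).coeff (i + 1) = -a i := by
    rw [coeff_linearCombination_basisP, Finsupp.sum, Finset.sum_eq_single_of_mem i hi]
    · rw [coeff_basisP_of_natAbs_eq_succ (by omega), mul_neg_one]
    · intro j hj hji
      have hlt : j < i := lt_of_le_of_ne (Finset.le_max' _ _ hj) hji
      rw [coeff_basisP_of_succ_lt_natAbs (by omega), mul_zero]
  rw [ha, AddMonoidAlgebra.coeff_zero, Finsupp.zero_apply, zero_eq_neg] at htop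
  exact Finsupp.mem_support_iff.mp hi htop

theorem exists_eq_C_add_linearCombination_basisP (f : ℤ[T;T⁻¹]) (hf : invert f = f) :
    ∃ c a, f = C c + Finsupp.linearCombination ℤ basisP a := by
  obtain ⟨N, hN⟩ := exists_coeff_eq_zero_of_lt_natAbs f
  induction N generalizing f with
  | zero =>
    refine ⟨f.coeff 0, 0, ?_⟩
    ext n
    rw [LinearMap.map_zero, add_zero, ← single_eq_C, AddMonoidAlgebra.coeff_single,
      Finsupp.single_apply]
    split_ifs with h
    · rw [h]
    · exact hN n (by omega)
  | succ N ih =>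
    set c := f.coeff (N + 1)
    obtain ⟨c', a, h⟩ := ih (f + c • basisP N)
      (by rw [map_add, map_zsmul, hf, invert_basisP]) fun n hn => by
        rw [AddMonoidAlgebra.coeff_add, Finsupp.add_apply, AddMonoidAlgebra.coeff_smul_apply,
          smul_eq_mul]
        obtain hedge | hbeyond := (Nat.lt_iff_add_one_le.mp hn).eq_or_lt
        · rw [coeff_basisP_of_natAbs_eq_succ hedge.symm]
          obtain rfl | rfl := Int.natAbs_eq_iff.mp hedge.symm
          · push_cast; ring
          · rw [coeff_neg_of_invert_eq hf]; push_cast; ring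
        · rw [hN n hbeyond, coeff_basisP_of_succ_lt_natAbs hbeyond, mul_zero, add_zero]
    refine ⟨c', a - Finsupp.single N c, ?_⟩
    rw [map_sub, Finsupp.linearCombination_single, ← add_sub_assoc, ← h, add_sub_cancel_right]

lemma evalz_eq_eval₂ (z : ℂˣ) (f : ℤ[T;T⁻¹]) :
    evalz z f = eval₂ (Int.castRingHom ℂ) z f := by
  induction f using LaurentPolynomial.induction_on' with
  | add p q hp hq =>
    rw [map_add, ← hp, ← hq, evalz, evalz, evalz, AddMonoidAlgebra.coeff_add,
      Finsupp.sum_add_index' (by simp) (by intros; push_cast; ring)]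
  | C_mul_T n c =>
    rw [evalz, ← single_eq_C_mul_T, AddMonoidAlgebra.coeff_single,
      Finsupp.sum_single_index (by simp), single_eq_C_mul_T, eval₂_C_mul_T,
      Units.val_zpow_eq_zpow_val]
    rfl

section Eval

variable {S : Type*} [CommRing S] (g : ℤ →+* S)

lemma eval₂_one_basisP (i : ℕ) : eval₂ g 1 (basisP i) = 0 := by
  rw [basisP, map_mul, map_sub, map_sub, map_ofNat, eval₂_T, eval₂_T, one_zpow, one_zpow,
    Units.val_one]
  norm_num

lemma eval₂_one_linearCombination_basisP (a : ℕ →₀ ℤ) :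
    eval₂ g 1 (Finsupp.linearCombination ℤ basisP a) = 0 := by
  rw [Finsupp.linearCombination_apply, map_finsuppSum]
  exact Finset.sum_eq_zero fun i _ => by simp only [map_zsmul, eval₂_one_basisP, smul_zero]

end Eval

/-- Every normalized Laurent polynomial `Δ` (i.e. `Δ(t⁻¹) = Δ(t)` and `Δ(1) = 1`) can be
written uniquely as `1 + a₀(2 - t - t⁻¹) + ∑_{i ≥ 1} a_i (tⁱ + t⁻ⁱ)(2 - t - t⁻¹)` for
integers `a_i`, all but finitely many zero. -/
theorem normalized_unique_expansion (Δ : LaurentPolynomial ℤ)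
    (hsym : invert Δ = Δ) (hone : evalz 1 Δ = 1) :
    ∃! a : ℕ →₀ ℤ, Δ = 1 + a.sum fun i c => C c * basisP i := by
  simp only [← smul_eq_C_mul, ← Finsupp.linearCombination_apply]
  obtain ⟨c, a, rfl⟩ := exists_eq_C_add_linearCombination_basisP Δ hsym
  have hc : c = 1 := by
    have := evalz_eq_eval₂ 1 (C c + Finsupp.linearCombination ℤ basisP a)
    rw [Units.val_one, hone, map_add, eval₂_C, eval₂_one_linearCombination_basisP,
      add_zero] at this
    rwa [eq_intCast, eq_comm, Int.cast_eq_one] at this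
  subst hc
  refine ⟨a, by rw [map_one], fun b hb => linearIndependent_basisP ?_⟩
  rw [map_one] at hb
  exact (add_left_cancel hb).symm
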